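/- arXiv:2211.03301 — 3 statements merged into one kernel-verified Lean document; each statement's English description precedes it below -/
import Mathlib

section
/- For β > α > 0 and vectors a_1, ..., a_N (N ≥ 2) in an inner product space: ∑_{i=1}^N ‖a_i‖² ≥ (1/(αN + (N−2)β)) · [ β·∑_{1≤i<j≤N} ‖a_i + a_j‖² + α·∑_{1≤i<j≤N} ‖a_i − a_j‖² + ((α−β)/(N−1)²)·(∑_{1≤i<j≤N} ‖a_i + a_j‖)² ]. -/
/-!
Write `S = ∑ ‖aᵢ‖²` and `v = ∑ aᵢ`. Summing the polarization identities over pairs gives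
`∑_{i<j} ‖aᵢ + aⱼ‖² = (N - 2) S + ‖v‖²` and `∑_{i<j} ‖aᵢ - aⱼ‖² = N S - ‖v‖²`, and since every
`aᵢ` occurs in `N - 1` pairs, the triangle inequality gives `∑_{i<j} ‖aᵢ + aⱼ‖ ≥ (N - 1) ‖v‖`.
As `α - β < 0`, the last term of the bracket is at most `(α - β) ‖v‖²`, and then the terms in
`‖v‖²` cancel, leaving exactly `(α N + (N - 2) β) S`.
-/

open Finset RCLike
open scoped InnerProductSpace

section PairSum

variable {ι M : Type*} [Fintype ι] [LinearOrder ι]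

def pairSum [AddCommMonoid M] (f : ι → ι → M) : M :=
  ∑ i, ∑ j ∈ univ.filter (fun j => i < j), f i j

section AddCommMonoid

variable [AddCommMonoid M]

theorem sum_sum_eq_pairSum_add_pairSum_swap_add_sum_diag (f : ι → ι → M) :
    ∑ i, ∑ j, f i j = pairSum f + pairSum (fun i j => f j i) + ∑ i, f i i := by
  have hswap : pairSum (fun i j => f j i) = ∑ i, ∑ j ∈ univ.filter (fun j => j < i), f i j :=
    sum_comm' fun _ _ => by simp [and_comm]
  rw [hswap, pairSum, ← sum_add_distrib, ← sum_add_distrib]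
  refine sum_congr rfl fun i _ => ?_
  have hnot : univ.filter (fun j => ¬ i < j) = insert i (univ.filter (fun j => j < i)) := by
    ext j
    simp [not_lt, le_iff_lt_or_eq, or_comm]
  rw [← sum_filter_add_sum_filter_not univ (fun j => i < j), hnot,
    sum_insert (by simp), add_assoc, add_comm (f i i)]

theorem sum_sum_eq_two_nsmul_pairSum_add_sum_diag {f : ι → ι → M}
    (hf : ∀ i j, f i j = f j i) :
    ∑ i, ∑ j, f i j = 2 • pairSum f + ∑ i, f i i := by
  rw [sum_sum_eq_pairSum_add_pairSum_swap_add_sum_diag, two_nsmul]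
  simp only [← hf]

theorem pairSum_add_add_sum (g : ι → M) :
    pairSum (fun i j => g i + g j) + ∑ i, g i = Fintype.card ι • ∑ i, g i := by
  have hsplit : pairSum (fun i j => g i + g j) =
      pairSum (fun i _ => g i) + pairSum (fun _ j => g j) := by
    simp only [pairSum, sum_add_distrib]
  have hdouble := sum_sum_eq_pairSum_add_pairSum_swap_add_sum_diag (fun i (_ : ι) => g i)
  simp only [sum_const, card_univ, ← smul_sum] at hdouble
  rw [hsplit, hdouble]

end AddCommMonoid

theorem norm_pairSum_le {E : Type*} [SeminormedAddCommGroup E] (f : ι → ι → E) :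
    ‖pairSum f‖ ≤ pairSum (fun i j => ‖f i j‖) :=
  (norm_sum_le _ _).trans (sum_le_sum fun _ _ => norm_sum_le _ _)

theorem card_sub_one_mul_norm_sum_le_pairSum_norm_add {E : Type*} [NormedAddCommGroup E]
    [NormedSpace ℝ E] (a : ι → E) :
    ((Fintype.card ι : ℝ) - 1) * ‖∑ i, a i‖ ≤ pairSum (fun i j => ‖a i + a j‖) := by
  have h := congrArg norm (pairSum_add_add_sum a)
  rw [norm_nsmul ℝ, nsmul_eq_mul] at h
  have := norm_add_le (pairSum fun i j => a i + a j) (∑ i, a i)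
  linarith [norm_pairSum_le (fun i j => a i + a j)]

end PairSum

section InnerProductSpace

variable {ι E : Type*} [NormedAddCommGroup E] [InnerProductSpace ℝ E] [Fintype ι]

theorem sum_sum_inner_eq_norm_sum_sq (a : ι → E) :
    ∑ i, ∑ j, ⟪a i, a j⟫_ℝ = ‖∑ i, a i‖ ^ 2 := by
  rw [← real_inner_self_eq_norm_sq, sum_inner]
  simp only [inner_sum]

theorem sum_sum_norm_add_sq (a : ι → E) :
    ∑ i, ∑ j, ‖a i + a j‖ ^ 2 =
      2 * Fintype.card ι * ∑ i, ‖a i‖ ^ 2 + 2 * ‖∑ i, a i‖ ^ 2 := by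
  simp only [norm_add_sq_real, sum_add_distrib, ← mul_sum, sum_sum_inner_eq_norm_sum_sq,
    sum_const, card_univ, nsmul_eq_mul]
  ring

theorem sum_sum_norm_sub_sq (a : ι → E) :
    ∑ i, ∑ j, ‖a i - a j‖ ^ 2 =
      2 * Fintype.card ι * ∑ i, ‖a i‖ ^ 2 - 2 * ‖∑ i, a i‖ ^ 2 := by
  simp only [norm_sub_sq_real, sum_add_distrib, sum_sub_distrib, ← mul_sum,
    sum_sum_inner_eq_norm_sum_sq, sum_const, card_univ, nsmul_eq_mul]
  ring

variable [LinearOrder ι]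

theorem pairSum_norm_add_sq (a : ι → E) :
    pairSum (fun i j => ‖a i + a j‖ ^ 2) =
      ((Fintype.card ι : ℝ) - 2) * ∑ i, ‖a i‖ ^ 2 + ‖∑ i, a i‖ ^ 2 := by
  have h := sum_sum_eq_two_nsmul_pairSum_add_sum_diag (f := fun i j => ‖a i + a j‖ ^ 2)
    fun i j => by rw [add_comm]
  simp only [sum_sum_norm_add_sq, ← two_smul ℝ (a _), norm_smul, Real.norm_ofNat, mul_pow,
    ← mul_sum, nsmul_eq_mul, Nat.cast_ofNat] at h
  linarith

theorem pairSum_norm_sub_sq (a : ι → E) :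
    pairSum (fun i j => ‖a i - a j‖ ^ 2) =
      (Fintype.card ι : ℝ) * ∑ i, ‖a i‖ ^ 2 - ‖∑ i, a i‖ ^ 2 := by
  have h := sum_sum_eq_two_nsmul_pairSum_add_sum_diag (f := fun i j => ‖a i - a j‖ ^ 2)
    fun i j => by rw [norm_sub_rev]
  simp only [sum_sum_norm_sub_sq, sub_self, norm_zero, nsmul_eq_mul, Nat.cast_ofNat, ne_eq,
    OfNat.ofNat_ne_zero, not_false_eq_true, zero_pow, sum_const_zero, add_zero] at h
  linarith

end InnerProductSpace

theorem weighted_norm_ineq_Z {𝕜 V : Type*} [RCLike 𝕜] [NormedAddCommGroup V]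
    [InnerProductSpace 𝕜 V] (N : ℕ) (hN : 2 ≤ N) (a : Fin N → V)
    (α β : ℝ) (hα : 0 < α) (hαβ : α < β) :
    ∑ i, ‖a i‖ ^ 2 ≥
      (1 / (α * N + ((N : ℝ) - 2) * β)) *
        (β * (∑ i : Fin N, ∑ j ∈ univ.filter (fun j => i < j), ‖a i + a j‖ ^ 2) +
         α * (∑ i : Fin N, ∑ j ∈ univ.filter (fun j => i < j), ‖a i - a j‖ ^ 2) +
         ((α - β) / ((N : ℝ) - 1) ^ 2) *
          (∑ i : Fin N, ∑ j ∈ univ.filter (fun j => i < j), ‖a i + a j‖) ^ 2) := by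
  -- only norms occur in the statement, so `V` may be regarded as a real inner product space
  let : InnerProductSpace ℝ V := InnerProductSpace.rclikeToReal 𝕜 V
  have hA := pairSum_norm_add_sq a
  have hB := pairSum_norm_sub_sq a
  have hT := card_sub_one_mul_norm_sum_le_pairSum_norm_add a
  simp only [Fintype.card_fin] at hA hB hT
  unfold pairSum at hA hB hT
  set T := ∑ i : Fin N, ∑ j ∈ univ.filter (fun j => i < j), ‖a i + a j‖
  have hN' : (2 : ℝ) ≤ N := by exact_mod_cast hN
  have hD : 0 < α * N + ((N : ℝ) - 2) * β := by nlinarith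
  have hcoef : (α - β) / ((N : ℝ) - 1) ^ 2 * T ^ 2 ≤ (α - β) * ‖∑ i, a i‖ ^ 2 :=
    calc _ ≤ (α - β) / ((N : ℝ) - 1) ^ 2 * (((N : ℝ) - 1) * ‖∑ i, a i‖) ^ 2 :=
          mul_le_mul_of_nonpos_left
            (pow_le_pow_left₀ (mul_nonneg (by linarith) (norm_nonneg _)) hT 2)
            (div_nonpos_of_nonpos_of_nonneg (by linarith) (by positivity))
      _ = (α - β) * ‖∑ i, a i‖ ^ 2 := by
          field_simp [show (N : ℝ) - 1 ≠ 0 by linarith]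
  rw [ge_iff_le, one_div_mul_eq_div, div_le_iff₀ hD, hA, hB]
  linarith
end

section
/- For N ≥ 2 Hermitian observables A_1, ..., A_N, a density matrix ρ, and α, β > 0: ∑_{i=1}^N Δ²_ρ(A_i) ≥ (1/(αN + (N−2)β)) · [ (2β/(N(N−1)))·(∑_{1≤i<j≤N} Δ_ρ(A_i + A_j))² + α·∑_{1≤i<j≤N} Δ²_ρ(A_i − A_j) + (α−β)·Δ²_ρ(∑_{i=1}^N A_i) ] (bound X of Theorem 2). -/
open Finset ComplexOrder

/-- Variance of an observable `M` in the state `ρ`. -/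
noncomputable def qvar {d : ℕ} (ρ M : Matrix (Fin d) (Fin d) ℂ) : ℝ :=
  ((ρ * M ^ 2).trace - (ρ * M).trace ^ 2).re

/-- Standard deviation of an observable `M` in the state `ρ`. -/
noncomputable def qdev {d : ℕ} (ρ M : Matrix (Fin d) (Fin d) ℂ) : ℝ :=
  Real.sqrt (qvar ρ M)

open scoped Matrix

/-!
The variance is a real quadratic form in the observable, so summing over the pairs `i < j` gives
`∑ Var(A_i - A_j) = N ∑ Var(A_i) - Var(∑ A_i)` and
`∑ Var(A_i + A_j) = (N - 2) ∑ Var(A_i) + Var(∑ A_i)`.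
By Cauchy–Schwarz over the `N (N - 1) / 2` pairs, the first term of the bound is at most
`β ∑ Var(A_i + A_j)`, and after this replacement the bound is exactly `∑ Var(A_i)`.
-/

namespace Finset

theorem sum_sum_lt_add_add_sum_eq_card_nsmul {ι M : Type*} [LinearOrder ι] [AddCommMonoid M]
    (s : Finset ι) (f : ι → M) :
    ∑ i ∈ s, ∑ j ∈ s with i < j, (f i + f j) + ∑ i ∈ s, f i = #s • ∑ i ∈ s, f i := by
  have hswap : ∑ i ∈ s, ∑ j ∈ s with i < j, f j = ∑ i ∈ s, ∑ j ∈ s with j < i, f i :=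
    sum_comm' (by simp only [mem_filter]; tauto)
  have hcard : ∀ i ∈ s, #{j ∈ s | i < j} + #{j ∈ s | j < i} + 1 = #s := by
    intro i hi
    rw [← card_erase_add_one hi,
      ← card_union_of_disjoint (disjoint_filter.2 fun j _ h h' => h.not_gt h')]
    congr 2
    ext j
    simp only [mem_union, mem_filter, mem_erase, ne_eq]
    grind
  simp only [sum_add_distrib]
  rw [hswap, ← sum_add_distrib, ← sum_add_distrib, smul_sum]
  refine sum_congr rfl fun i hi => ?_
  rw [sum_const, sum_const, ← add_nsmul, ← succ_nsmul, hcard i hi]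

theorem sum_card_filter_lt_eq_choose_two {ι : Type*} [LinearOrder ι] (s : Finset ι) :
    ∑ i ∈ s, #{j ∈ s | i < j} = (#s).choose 2 := by
  have h := sum_sum_lt_add_add_sum_eq_card_nsmul s fun _ => 1
  simp only [sum_const, smul_eq_mul, mul_one, ← sum_mul] at h
  rw [Nat.choose_two_right, Nat.mul_sub_one]
  omega

theorem sq_sum_sum_le_sum_card_mul_sum_sum_sq {ι κ R : Type*} [Semiring R] [LinearOrder R]
    [IsStrictOrderedRing R] [ExistsAddOfLE R] (s : Finset ι) (t : ι → Finset κ) (f : ι → κ → R) :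
    (∑ i ∈ s, ∑ j ∈ t i, f i j) ^ 2 ≤ (∑ i ∈ s, #(t i) : ℕ) * ∑ i ∈ s, ∑ j ∈ t i, f i j ^ 2 := by
  rw [sum_sigma', sum_sigma', ← card_sigma]
  exact sq_sum_le_card_mul_sum_sq

end Finset

namespace QuadraticMap

variable {ι R M N : Type*} [LinearOrder ι] [CommRing R] [AddCommGroup M] [AddCommGroup N]
  [Module R M] [Module R N] (Q : QuadraticMap R M N) (s : Finset ι) (x : ι → M)

theorem map_sum_eq_sum_add_sum_polar :
    Q (∑ i ∈ s, x i) = ∑ i ∈ s, Q (x i) + ∑ i ∈ s, ∑ j ∈ s with i < j, polar Q (x i) (x j) := by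
  classical
  rw [Q.map_sum, sum_sym2_filter_not_isDiag,
    sum_finset_product _ s (fun i => {j ∈ s | i < j}) fun p => ?_]
  · simp
  · simp only [mem_filter, mem_offDiag]
    exact ⟨fun ⟨⟨h1, h2, _⟩, h⟩ => ⟨h1, h2, h⟩, fun ⟨h1, h2, h⟩ => ⟨⟨h1, h2, h.ne⟩, h⟩⟩

theorem sum_sum_lt_map_sub_add_map_sum :
    ∑ i ∈ s, ∑ j ∈ s with i < j, Q (x i - x j) + Q (∑ i ∈ s, x i) = #s • ∑ i ∈ s, Q (x i) := by
  have hsub : ∀ i j, Q (x i - x j) = Q (x i) + Q (x j) - polar Q (x i) (x j) := fun i j => by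
    rw [sub_eq_add_neg, QuadraticMap.map_add Q, Q.map_neg, polar_neg_right, sub_eq_add_neg]
  simp only [hsub, sum_sub_distrib]
  rw [map_sum_eq_sum_add_sum_polar, ← sum_sum_lt_add_add_sum_eq_card_nsmul]
  abel

theorem sum_sum_lt_map_add_add_two_nsmul_sum_map :
    ∑ i ∈ s, ∑ j ∈ s with i < j, Q (x i + x j) + 2 • ∑ i ∈ s, Q (x i) =
      #s • ∑ i ∈ s, Q (x i) + Q (∑ i ∈ s, x i) := by
  rw [map_sum_eq_sum_add_sum_polar, ← sum_sum_lt_add_add_sum_eq_card_nsmul]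
  simp only [QuadraticMap.map_add Q _ (x _), sum_add_distrib]
  abel

end QuadraticMap

theorem Matrix.star_trace_mul_of_isHermitian {n R : Type*} [Fintype n] [CommRing R] [StarRing R]
    {A B : Matrix n n R} (hA : A.IsHermitian) (hB : B.IsHermitian) :
    star (A * B).trace = (A * B).trace := by
  rw [← Matrix.trace_conjTranspose, Matrix.conjTranspose_mul, hA.eq, hB.eq, Matrix.trace_mul_comm]

section Variance

variable {d : ℕ} (ρ : Matrix (Fin d) (Fin d) ℂ)

noncomputable def covarianceForm : LinearMap.BilinForm ℝ (Matrix (Fin d) (Fin d) ℂ) :=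
  LinearMap.mk₂ ℝ (fun M N => ((ρ * (M * N)).trace - (ρ * M).trace * (ρ * N).trace).re)
    (fun M M' N => by simp [add_mul, mul_add]; ring)
    (fun c M N => by simp [Matrix.trace_smul]; ring)
    (fun M N N' => by simp [mul_add, Matrix.trace_add]; ring)
    (fun c M N => by simp [Matrix.trace_smul]; ring)

noncomputable def qvarQuadraticMap : QuadraticMap ℝ (Matrix (Fin d) (Fin d) ℂ) ℝ :=
  (covarianceForm ρ).toQuadraticMap

theorem qvarQuadraticMap_apply (M : Matrix (Fin d) (Fin d) ℂ) :
    qvarQuadraticMap ρ M = qvar ρ M := by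
  simp [qvarQuadraticMap, covarianceForm, qvar, sq]

variable {ρ} {M : Matrix (Fin d) (Fin d) ℂ}

theorem qvar_nonneg (hρ : ρ.PosSemidef) (hρ1 : ρ.trace = 1) (hM : M.IsHermitian) :
    0 ≤ qvar ρ M := by
  set t := (ρ * M).trace
  set C := M - t • (1 : Matrix (Fin d) (Fin d) ℂ)
  have ht : star t = t := Matrix.star_trace_mul_of_isHermitian hρ.1 hM
  have hC : Cᴴ = C := by
    simp only [C, Matrix.conjTranspose_sub, Matrix.conjTranspose_smul, Matrix.conjTranspose_one,
      hM.eq, ht]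
  have hCC : C * C = M ^ 2 - (2 * t) • M + (t * t) • 1 := by
    simp only [C, sq, sub_mul, mul_sub, Matrix.smul_mul, Matrix.mul_smul, one_mul, mul_one,
      smul_smul, two_mul, add_smul]
    abel
  have htrace : (C * ρ * Cᴴ).trace = (ρ * M ^ 2).trace - t ^ 2 := by
    rw [hC, Matrix.trace_mul_cycle, hCC, Matrix.trace_mul_comm]
    simp only [mul_sub, mul_add, Matrix.trace_sub, Matrix.trace_add, Matrix.mul_smul,
      Matrix.trace_smul, Matrix.mul_one, hρ1, smul_eq_mul]
    ring
  have hnonneg := (hρ.mul_mul_conjTranspose_same C).trace_nonneg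
  rw [htrace] at hnonneg
  exact (Complex.nonneg_iff.mp hnonneg).1

end Variance

theorem theorem2_X {d N : ℕ} (hN : 2 ≤ N) (ρ : Matrix (Fin d) (Fin d) ℂ)
    (hρ : ρ.PosSemidef) (hρ1 : ρ.trace = 1)
    (A : Fin N → Matrix (Fin d) (Fin d) ℂ) (hA : ∀ i, (A i).IsHermitian)
    (α β : ℝ) (hα : 0 < α) (hβ : 0 < β) :
    ∑ i, qvar ρ (A i) ≥
      (1 / (α * N + ((N : ℝ) - 2) * β)) *
        ((2 * β / ((N : ℝ) * ((N : ℝ) - 1))) *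
          (∑ i : Fin N, ∑ j ∈ univ.filter (fun j => i < j), qdev ρ (A i + A j)) ^ 2 +
         α * (∑ i : Fin N, ∑ j ∈ univ.filter (fun j => i < j), qvar ρ (A i - A j)) +
         (α - β) * qvar ρ (∑ i, A i)) := by
  set S := ∑ i, qvar ρ (A i)
  set V := qvar ρ (∑ i, A i)
  set D := ∑ i : Fin N, ∑ j ∈ univ.filter (fun j => i < j), qvar ρ (A i - A j)
  set P := ∑ i : Fin N, ∑ j ∈ univ.filter (fun j => i < j), qvar ρ (A i + A j)
  set T := ∑ i : Fin N, ∑ j ∈ univ.filter (fun j => i < j), qdev ρ (A i + A j)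
  have hNR : (2 : ℝ) ≤ N := by exact_mod_cast hN
  have hD : D + V = N * S := by
    simpa [qvarQuadraticMap_apply] using (qvarQuadraticMap ρ).sum_sum_lt_map_sub_add_map_sum univ A
  have hP : P + 2 * S = N * S + V := by
    simpa [qvarQuadraticMap_apply] using
      (qvarQuadraticMap ρ).sum_sum_lt_map_add_add_two_nsmul_sum_map univ A
  have hT : T ^ 2 ≤ N * (N - 1) / 2 * P := by
    have hsq : ∀ i j, qdev ρ (A i + A j) ^ 2 = qvar ρ (A i + A j) := fun i j =>
      Real.sq_sqrt (qvar_nonneg hρ hρ1 ((hA i).add (hA j)))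
    have hCS := sq_sum_sum_le_sum_card_mul_sum_sum_sq univ (fun i => univ.filter (fun j => i < j))
      fun i j => qdev ρ (A i + A j)
    simpa [hsq, sum_card_filter_lt_eq_choose_two, Nat.cast_choose_two] using hCS
  have hK : 0 < α * N + ((N : ℝ) - 2) * β := by nlinarith
  have hTP : 2 * β / (N * (N - 1)) * T ^ 2 ≤ β * P := by
    rw [div_mul_eq_mul_div, div_le_iff₀ (by nlinarith)]
    nlinarith
  rw [ge_iff_le, one_div, inv_mul_le_iff₀ hK]
  linear_combination hTP + α * hD + β * hP
end

section
/- For N ≥ 2 Hermitian observables A_1, ..., A_N, a density matrix ρ, and reals β > α > 0: ∑_{i=1}^N Δ²_ρ(A_i) ≥ (1/(αN + (N−2)β)) · [ β·∑_{1≤i<j≤N} Δ²_ρ(A_i + A_j) + α·∑_{1≤i<j≤N} Δ²_ρ(A_i − A_j) + ((α−β)/(N−1)²)·(∑_{1≤i<j≤N} Δ_ρ(A_i + A_j))² ] (bound Z of Theorem 2). -/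
/-!
Let `S = ∑ Δ²(A_i)` and let `C = ∑_{i<j} Cov(A_i, A_j)` be built from the symmetrized covariance
`qcov`, the polar form of the variance. Expanding variances gives
`∑_{i<j} Δ²(A_i ± A_j) = (N - 1) S ± 2C` and `Δ²(∑ A_i) = S + 2C`, hence the exact identity
`β ∑ Δ²(A_i + A_j) + α ∑ Δ²(A_i - A_j) + (α - β) Δ²(∑ A_i) = (αN + (N - 2)β) S`.
By Cauchy–Schwarz for the covariance, `Δ` is subadditive on Hermitian observables, and
`∑_{i<j} (A_i + A_j) = (N - 1) ∑ A_i`, so `(N - 1) Δ(∑ A_i) ≤ ∑_{i<j} Δ(A_i + A_j)`.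
Since `α - β < 0`, this bounds the last term of the bracket by `(α - β) Δ²(∑ A_i)`.
-/

open Finset ComplexOrder

open Matrix

section TriangleSums

variable {ι M : Type*} [Fintype ι] [LinearOrder ι] [AddCommMonoid M]

theorem sum_triangle_add_sum_triangle_swap_add_sum_diag (g : ι → ι → M) :
    ∑ i, ∑ j ∈ univ.filter (fun j => i < j), g i j +
        ∑ i, ∑ j ∈ univ.filter (fun j => i < j), g j i + ∑ i, g i i =
      ∑ i, ∑ j, g i j := by
  have hswap : ∑ i, ∑ j ∈ univ.filter (fun j => i < j), g j i =
      ∑ i, ∑ j ∈ univ.filter (fun j => j < i), g i j :=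
    sum_comm' fun i j => by simp
  rw [hswap, ← sum_add_distrib, ← sum_add_distrib]
  refine sum_congr rfl fun i _ => ?_
  rw [← sum_union (disjoint_filter.2 fun j _ h h' => lt_asymm h h'),
    ← add_sum_erase _ _ (mem_univ i), add_comm]
  congr 2
  ext j
  simp [eq_comm]

theorem sum_triangle_add_add_sum (f : ι → M) :
    ∑ i, ∑ j ∈ univ.filter (fun j => i < j), (f i + f j) + ∑ i, f i =
      Fintype.card ι • ∑ i, f i := by
  simp only [sum_add_distrib]
  rw [sum_triangle_add_sum_triangle_swap_add_sum_diag (fun i _ => f i)]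
  simp [smul_sum]

end TriangleSums

section Covariance

variable {d : ℕ} (ρ : Matrix (Fin d) (Fin d) ℂ)

noncomputable def qcov (X Y : Matrix (Fin d) (Fin d) ℂ) : ℝ :=
  (((ρ * (X * Y)).trace + (ρ * (Y * X)).trace) / 2 - (ρ * X).trace * (ρ * Y).trace).re

theorem qcov_self (X : Matrix (Fin d) (Fin d) ℂ) : qcov ρ X X = qvar ρ X := by
  simp only [qcov, qvar, sq, add_self_div_two]

theorem qcov_comm (X Y : Matrix (Fin d) (Fin d) ℂ) : qcov ρ X Y = qcov ρ Y X := by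
  simp only [qcov, add_comm, mul_comm]

theorem qcov_add_left (X X' Y : Matrix (Fin d) (Fin d) ℂ) :
    qcov ρ (X + X') Y = qcov ρ X Y + qcov ρ X' Y := by
  simp only [qcov, ← Complex.add_re, Matrix.mul_add, Matrix.add_mul, trace_add]
  ring_nf

theorem qcov_add_right (X Y Y' : Matrix (Fin d) (Fin d) ℂ) :
    qcov ρ X (Y + Y') = qcov ρ X Y + qcov ρ X Y' := by
  rw [qcov_comm, qcov_add_left, qcov_comm ρ Y, qcov_comm ρ Y']

theorem qcov_smul_left (t : ℝ) (X Y : Matrix (Fin d) (Fin d) ℂ) :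
    qcov ρ (t • X) Y = t * qcov ρ X Y := by
  simp only [qcov, ← Complex.re_ofReal_mul, Matrix.smul_mul, Matrix.mul_smul, trace_smul,
    Complex.real_smul]
  ring_nf

theorem qcov_smul_right (t : ℝ) (X Y : Matrix (Fin d) (Fin d) ℂ) :
    qcov ρ X (t • Y) = t * qcov ρ X Y := by
  rw [qcov_comm, qcov_smul_left, qcov_comm]

theorem qcov_sum_left {ι : Type*} (s : Finset ι) (X : ι → Matrix (Fin d) (Fin d) ℂ)
    (Y : Matrix (Fin d) (Fin d) ℂ) : qcov ρ (∑ i ∈ s, X i) Y = ∑ i ∈ s, qcov ρ (X i) Y :=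
  map_sum (AddMonoidHom.mk' (qcov ρ · Y) fun X X' => qcov_add_left ρ X X' Y) X s

theorem qcov_sum_right {ι : Type*} (s : Finset ι) (X : Matrix (Fin d) (Fin d) ℂ)
    (Y : ι → Matrix (Fin d) (Fin d) ℂ) : qcov ρ X (∑ i ∈ s, Y i) = ∑ i ∈ s, qcov ρ X (Y i) := by
  simp only [qcov_comm ρ X, qcov_sum_left]

theorem qvar_add (X Y : Matrix (Fin d) (Fin d) ℂ) :
    qvar ρ (X + Y) = qvar ρ X + qvar ρ Y + 2 * qcov ρ X Y := by
  simp only [← qcov_self, qcov_add_left, qcov_add_right, qcov_comm ρ Y X]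
  ring

theorem qvar_smul (t : ℝ) (X : Matrix (Fin d) (Fin d) ℂ) : qvar ρ (t • X) = t ^ 2 * qvar ρ X := by
  rw [← qcov_self, qcov_smul_left, qcov_smul_right, qcov_self]
  ring

theorem qvar_sub (X Y : Matrix (Fin d) (Fin d) ℂ) :
    qvar ρ (X - Y) = qvar ρ X + qvar ρ Y - 2 * qcov ρ X Y := by
  rw [sub_eq_add_neg, ← neg_one_smul ℝ Y, qvar_add, qvar_smul, qcov_smul_right]
  ring

theorem qdev_smul (t : ℝ) (X : Matrix (Fin d) (Fin d) ℂ) : qdev ρ (t • X) = |t| * qdev ρ X := by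
  rw [qdev, qdev, qvar_smul, Real.sqrt_mul (sq_nonneg t), Real.sqrt_sq_eq_abs]

end Covariance

section State

variable {d : ℕ} {ρ : Matrix (Fin d) (Fin d) ℂ}

theorem qvar_nonneg_s16 (hρ : ρ.PosSemidef) (hρ1 : ρ.trace = 1) {X : Matrix (Fin d) (Fin d) ℂ}
    (hX : X.IsHermitian) : 0 ≤ qvar ρ X := by
  set c := (ρ * X).trace with hc
  -- centring `Y = X - c • 1`: the terms in `star c` cancel, so `c` need not be known to be real
  have hcentred : (ρ * X ^ 2).trace - c ^ 2 =
      ((X - c • 1)ᴴ * ρ * (X - c • 1)).trace := by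
    rw [conjTranspose_sub, conjTranspose_smul, conjTranspose_one, hX.eq]
    simp only [Matrix.mul_sub, Matrix.sub_mul, Matrix.mul_smul, Matrix.smul_mul, Matrix.mul_one,
      Matrix.one_mul, trace_sub, trace_smul, smul_eq_mul]
    rw [sq, ← Matrix.mul_assoc, trace_mul_cycle, trace_mul_comm X ρ, ← hc, hρ1]
    ring
  have h := (hρ.conjTranspose_mul_mul_same (X - c • 1)).trace_nonneg
  rw [← hcentred] at h
  exact (Complex.nonneg_iff.mp h).1

theorem qcov_sq_le_qvar_mul_qvar (hρ : ρ.PosSemidef) (hρ1 : ρ.trace = 1)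
    {X Y : Matrix (Fin d) (Fin d) ℂ} (hX : X.IsHermitian) (hY : Y.IsHermitian) :
    qcov ρ X Y ^ 2 ≤ qvar ρ X * qvar ρ Y := by
  have hquad : ∀ t : ℝ, 0 ≤ qvar ρ Y * (t * t) + 2 * qcov ρ X Y * t + qvar ρ X := fun t => by
    have h := qvar_nonneg_s16 hρ hρ1 (hX.add (hY.smul (IsSelfAdjoint.all t)))
    rw [qvar_add, qvar_smul, qcov_smul_right] at h
    linarith
  have := discrim_le_zero hquad
  rw [discrim] at this
  linarith

theorem qdev_add_le (hρ : ρ.PosSemidef) (hρ1 : ρ.trace = 1) {X Y : Matrix (Fin d) (Fin d) ℂ}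
    (hX : X.IsHermitian) (hY : Y.IsHermitian) :
    qdev ρ (X + Y) ≤ qdev ρ X + qdev ρ Y := by
  have hvX := qvar_nonneg_s16 hρ hρ1 hX
  have hvY := qvar_nonneg_s16 hρ hρ1 hY
  have hcov : qcov ρ X Y ≤ √(qvar ρ X) * √(qvar ρ Y) := by
    rw [← Real.sqrt_mul hvX]
    exact Real.le_sqrt_of_sq_le (qcov_sq_le_qvar_mul_qvar hρ hρ1 hX hY)
  rw [qdev, qdev, qdev, Real.sqrt_le_left (by positivity), qvar_add, add_sq, Real.sq_sqrt hvX,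
    Real.sq_sqrt hvY]
  linarith

theorem qdev_sum_le (hρ : ρ.PosSemidef) (hρ1 : ρ.trace = 1) {ι : Type*} (s : Finset ι)
    {X : ι → Matrix (Fin d) (Fin d) ℂ} (hX : ∀ i ∈ s, (X i).IsHermitian) :
    qdev ρ (∑ i ∈ s, X i) ≤ ∑ i ∈ s, qdev ρ (X i) :=
  le_sum_of_subadditive_on_pred (qdev ρ) IsHermitian (by simp [qdev, qvar])
    (fun _ _ => qdev_add_le hρ hρ1) (fun _ _ => IsHermitian.add) X hX

end State

section Families

variable {d : ℕ} {ι : Type*} [Fintype ι] [LinearOrder ι]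

theorem qvar_sum (ρ : Matrix (Fin d) (Fin d) ℂ) (A : ι → Matrix (Fin d) (Fin d) ℂ) :
    qvar ρ (∑ i, A i) =
      ∑ i, qvar ρ (A i) + 2 * ∑ i, ∑ j ∈ univ.filter (fun j => i < j), qcov ρ (A i) (A j) := by
  rw [← qcov_self, qcov_sum_left]
  simp only [qcov_sum_right]
  rw [← sum_triangle_add_sum_triangle_swap_add_sum_diag]
  simp only [qcov_self, qcov_comm ρ (A _) (A _)]
  ring

theorem sum_triangle_qvar_add (ρ : Matrix (Fin d) (Fin d) ℂ) (A : ι → Matrix (Fin d) (Fin d) ℂ) :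
    ∑ i, ∑ j ∈ univ.filter (fun j => i < j), qvar ρ (A i + A j) + ∑ i, qvar ρ (A i) =
      Fintype.card ι * ∑ i, qvar ρ (A i) +
        2 * ∑ i, ∑ j ∈ univ.filter (fun j => i < j), qcov ρ (A i) (A j) := by
  have h := sum_triangle_add_add_sum fun i => qvar ρ (A i)
  simp only [sum_add_distrib, nsmul_eq_mul] at h
  simp only [qvar_add, sum_add_distrib, ← mul_sum]
  linear_combination h

theorem sum_triangle_qvar_sub (ρ : Matrix (Fin d) (Fin d) ℂ) (A : ι → Matrix (Fin d) (Fin d) ℂ) :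
    ∑ i, ∑ j ∈ univ.filter (fun j => i < j), qvar ρ (A i - A j) + ∑ i, qvar ρ (A i) =
      Fintype.card ι * ∑ i, qvar ρ (A i) -
        2 * ∑ i, ∑ j ∈ univ.filter (fun j => i < j), qcov ρ (A i) (A j) := by
  have h := sum_triangle_add_add_sum fun i => qvar ρ (A i)
  simp only [sum_add_distrib, nsmul_eq_mul] at h
  simp only [qvar_sub, sum_add_distrib, sum_sub_distrib, ← mul_sum]
  linear_combination h

theorem card_sub_one_mul_qdev_sum_le {ρ : Matrix (Fin d) (Fin d) ℂ} (hρ : ρ.PosSemidef)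
    (hρ1 : ρ.trace = 1) {A : ι → Matrix (Fin d) (Fin d) ℂ} (hA : ∀ i, (A i).IsHermitian) :
    ((Fintype.card ι : ℝ) - 1) * qdev ρ (∑ i, A i) ≤
      ∑ i, ∑ j ∈ univ.filter (fun j => i < j), qdev ρ (A i + A j) := by
  have hpairs : ∑ i, ∑ j ∈ univ.filter (fun j => i < j), (A i + A j) =
      ((Fintype.card ι : ℝ) - 1) • ∑ i, A i := by
    rw [sub_smul, one_smul, Nat.cast_smul_eq_nsmul, ← sum_triangle_add_add_sum,
      add_sub_cancel_right]
  calc ((Fintype.card ι : ℝ) - 1) * qdev ρ (∑ i, A i)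
      ≤ |(Fintype.card ι : ℝ) - 1| * qdev ρ (∑ i, A i) :=
        mul_le_mul_of_nonneg_right (le_abs_self _) (Real.sqrt_nonneg _)
    _ = qdev ρ (∑ i, ∑ j ∈ univ.filter (fun j => i < j), (A i + A j)) := by
        rw [hpairs, qdev_smul]
    _ ≤ ∑ i, qdev ρ (∑ j ∈ univ.filter (fun j => i < j), (A i + A j)) :=
        qdev_sum_le hρ hρ1 _ fun i _ => isSelfAdjoint_sum _ fun j _ => (hA i).add (hA j)
    _ ≤ ∑ i, ∑ j ∈ univ.filter (fun j => i < j), qdev ρ (A i + A j) :=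
        sum_le_sum fun i _ => qdev_sum_le hρ hρ1 _ fun j _ => (hA i).add (hA j)

end Families

theorem theorem2_Z {d N : ℕ} (hN : 2 ≤ N) (ρ : Matrix (Fin d) (Fin d) ℂ)
    (hρ : ρ.PosSemidef) (hρ1 : ρ.trace = 1)
    (A : Fin N → Matrix (Fin d) (Fin d) ℂ) (hA : ∀ i, (A i).IsHermitian)
    (α β : ℝ) (hα : 0 < α) (hαβ : α < β) :
    ∑ i, qvar ρ (A i) ≥
      (1 / (α * N + ((N : ℝ) - 2) * β)) *
        (β * (∑ i : Fin N, ∑ j ∈ univ.filter (fun j => i < j), qvar ρ (A i + A j)) +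
         α * (∑ i : Fin N, ∑ j ∈ univ.filter (fun j => i < j), qvar ρ (A i - A j)) +
         ((α - β) / ((N : ℝ) - 1) ^ 2) *
          (∑ i : Fin N, ∑ j ∈ univ.filter (fun j => i < j), qdev ρ (A i + A j)) ^ 2) := by
  have hN' : (1 : ℝ) ≤ (N : ℝ) - 1 := by
    have : (2 : ℝ) ≤ N := by exact_mod_cast hN
    linarith
  have hK : 0 < α * N + ((N : ℝ) - 2) * β := by nlinarith
  have hP := sum_triangle_qvar_add ρ A
  have hM := sum_triangle_qvar_sub ρ A
  have hT := qvar_sum ρ A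
  have hD := card_sub_one_mul_qdev_sum_le hρ hρ1 hA
  rw [Fintype.card_fin] at hP hM hD
  set D := ∑ i : Fin N, ∑ j ∈ univ.filter (fun j => i < j), qdev ρ (A i + A j)
  have hDsq : ((N : ℝ) - 1) ^ 2 * qvar ρ (∑ i, A i) ≤ D ^ 2 := by
    rw [← Real.sq_sqrt (qvar_nonneg_s16 hρ hρ1 (isSelfAdjoint_sum _ fun i _ => hA i)), ← mul_pow]
    exact pow_le_pow_left₀ (mul_nonneg (by linarith) (Real.sqrt_nonneg _)) hD 2
  have hlast : (α - β) / ((N : ℝ) - 1) ^ 2 * D ^ 2 ≤ (α - β) * qvar ρ (∑ i, A i) := by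
    calc (α - β) / ((N : ℝ) - 1) ^ 2 * D ^ 2
        ≤ (α - β) / ((N : ℝ) - 1) ^ 2 * (((N : ℝ) - 1) ^ 2 * qvar ρ (∑ i, A i)) :=
          mul_le_mul_of_nonpos_left hDsq
            (div_nonpos_of_nonpos_of_nonneg (by linarith) (sq_nonneg _))
      _ = (α - β) * qvar ρ (∑ i, A i) := by field_simp
  rw [ge_iff_le, one_div_mul_eq_div, div_le_iff₀ hK]
  linear_combination hlast + β * hP + α * hM + (α - β) * hT
end
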